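/- arXiv:2508.01738 — 2 statements merged into one kernel-verified Lean document; each statement's English description precedes it below -/
import Mathlib

section
/- If K is a probability density with CDF F_K, then the derivative of the smoothed check loss L_h(e;τ) = (ρ_τ * K_h)(e) with respect to e equals Ψ_h(e;τ) = F_K(e/h) − (1−τ), for every e where F_K is continuous. -/
/-!
The check loss `ρ_τ` is `1`-Lipschitz for `τ ∈ [0, 1]` and differentiable away from `0` with
derivative `τ - 1{u < 0}`. Lipschitz continuity gives an integrable dominating function `|g|`, so
differentiation under the integral sign applies for every `e`, the kink at `v = e` being a null set:
`d/dx ∫ ρ_τ(x - v) g(v) dv = τ ∫ g - ∫_{v > e} g`. For `g = K_h`, rescaling turns this into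
`τ - (1 - F_K(e/h))`.
-/

open MeasureTheory Set

noncomputable def checkLoss (τ u : ℝ) : ℝ := u * (τ - if u < 0 then 1 else 0)

section checkLoss

variable {τ : ℝ}

lemma lipschitzWith_checkLoss (hτ : τ ∈ Icc (0 : ℝ) 1) : LipschitzWith 1 (checkLoss τ) := by
  refine LipschitzWith.of_dist_le_mul fun a b => ?_
  obtain ⟨h0, h1⟩ := hτ
  simp only [checkLoss, NNReal.coe_one, one_mul, Real.dist_eq]
  rw [abs_le]
  rcases lt_or_ge a 0 with ha | ha <;> rcases lt_or_ge b 0 with hb | hb <;>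
    simp only [ha, hb, if_true, if_false, not_lt.2] <;>
    constructor <;> nlinarith [le_abs_self (a - b), neg_abs_le (a - b)]

lemma abs_checkLoss_le (hτ : τ ∈ Icc (0 : ℝ) 1) (u : ℝ) : |checkLoss τ u| ≤ |u| := by
  simpa [checkLoss, Real.dist_eq] using (lipschitzWith_checkLoss hτ).dist_le_mul u 0

lemma hasDerivAt_checkLoss {u : ℝ} (hu : u ≠ 0) :
    HasDerivAt (checkLoss τ) (τ - if u < 0 then 1 else 0) u := by
  have hlin : HasDerivAt (fun x => x * (τ - if u < 0 then 1 else 0))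
      (τ - if u < 0 then 1 else 0) u := by
    simpa using (hasDerivAt_id u).mul_const (τ - if u < 0 then 1 else 0)
  refine hlin.congr_of_eventuallyEq ?_
  rcases hu.lt_or_gt with hneg | hpos
  · filter_upwards [Iio_mem_nhds hneg] with x hx
    simp [checkLoss, hneg, mem_Iio.1 hx]
  · filter_upwards [Ioi_mem_nhds hpos] with x hx
    simp [checkLoss, hpos.not_gt, (mem_Ioi.1 hx).not_gt]

end checkLoss

theorem hasDerivAt_integral_checkLoss_sub_mul {τ : ℝ} (hτ : τ ∈ Icc (0 : ℝ) 1) {g : ℝ → ℝ}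
    (hg : Integrable g) (hg_moment : Integrable fun v => |v| * g v) (e : ℝ) :
    HasDerivAt (fun x => ∫ v, checkLoss τ (x - v) * g v)
      (τ * (∫ v, g v) - ∫ v in Ioi e, g v) e := by
  have hcont := (lipschitzWith_checkLoss hτ).continuous
  have hF_meas : ∀ x : ℝ, AEStronglyMeasurable (fun v => checkLoss τ (x - v) * g v) := fun x =>
    ((hcont.comp (continuous_sub_left x)).aestronglyMeasurable).mul hg.aestronglyMeasurable
  have hF_int : Integrable fun v => checkLoss τ (e - v) * g v := by
    refine ((hg.norm.const_mul |e|).add hg_moment.norm).mono' (hF_meas e) (.of_forall fun v => ?_)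
    calc ‖checkLoss τ (e - v) * g v‖ ≤ (|e| + |v|) * ‖g v‖ := by
          rw [norm_mul]
          gcongr
          exact (abs_checkLoss_le hτ _).trans (abs_sub _ _)
      _ = |e| * ‖g v‖ + ‖|v| * g v‖ := by simp only [Real.norm_eq_abs, norm_mul, abs_abs]; ring
  have hF'_int : Integrable fun v => τ * g v - (Ioi e).indicator g v :=
    (hg.const_mul τ).sub (hg.indicator measurableSet_Ioi)
  have h_lip : ∀ᵐ v, LipschitzOnWith (Real.nnabs (g v)) (fun x => checkLoss τ (x - v) * g v)
      (Metric.ball e 1) := .of_forall fun v => LipschitzWith.lipschitzOnWith <|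
    LipschitzWith.of_dist_le_mul fun x y => by
      rw [Real.dist_eq, Real.dist_eq, ← sub_mul, abs_mul, Real.coe_nnabs, mul_comm]
      refine mul_le_mul_of_nonneg_left ?_ (abs_nonneg _)
      simpa [Real.dist_eq] using (lipschitzWith_checkLoss hτ).dist_le_mul (x - v) (y - v)
  have h_diff : ∀ᵐ v, HasDerivAt (fun x => checkLoss τ (x - v) * g v)
      (τ * g v - (Ioi e).indicator g v) e := by
    filter_upwards [compl_mem_ae_iff.2 (measure_singleton e)] with v hv
    have hev : e - v ≠ 0 := sub_ne_zero.2 (Ne.symm hv)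
    refine (((hasDerivAt_checkLoss hev).comp_sub_const e v).mul_const (g v)).congr_deriv ?_
    simp only [indicator_apply, mem_Ioi, sub_neg]
    split_ifs <;> ring
  have := (hasDerivAt_integral_of_dominated_loc_of_lip (Metric.ball_mem_nhds e one_pos)
    (.of_forall hF_meas) hF_int hF'_int.aestronglyMeasurable h_lip hg h_diff).2
  rwa [integral_sub (hg.const_mul τ) (hg.indicator measurableSet_Ioi), integral_const_mul,
    integral_indicator measurableSet_Ioi] at this

noncomputable def scaledKernel (K : ℝ → ℝ) (h v : ℝ) : ℝ := h⁻¹ * K (v / h)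

section scaledKernel

variable {K : ℝ → ℝ} {h : ℝ}

lemma integrable_scaledKernel (hK : Integrable K) (hh : h ≠ 0) : Integrable (scaledKernel K h) :=
  (hK.comp_div hh).const_mul h⁻¹

lemma integrable_abs_mul_scaledKernel (hK : Integrable fun z => |z| * K z) (hh : 0 < h) :
    Integrable fun v => |v| * scaledKernel K h v :=
  (hK.comp_div hh.ne').congr <| .of_forall fun v => by
    simp only [scaledKernel, abs_div, abs_of_pos hh]
    ring

lemma integral_scaledKernel (hh : 0 < h) : ∫ v, scaledKernel K h v = ∫ z, K z := by
  simp [scaledKernel, integral_const_mul, Measure.integral_comp_div, abs_of_pos hh, hh.ne']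

lemma setIntegral_Ioi_scaledKernel (hh : 0 < h) (e : ℝ) :
    ∫ v in Ioi e, scaledKernel K h v = ∫ z in Ioi (e / h), K z := by
  simp [scaledKernel, integral_const_mul, div_eq_mul_inv,
    integral_comp_mul_right_Ioi K e (inv_pos.2 hh), hh.ne']

end scaledKernel

theorem smoothed_check_loss_hasDerivAt_general
    (τ h : ℝ) (hτ : τ ∈ Set.Ioo (0 : ℝ) 1) (hh : 0 < h)
    (K : ℝ → ℝ) (hKint : Integrable K)
    (hK1 : ∫ v, K v = 1)
    (hMint : Integrable (fun v => |v| * K v))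
    (F_K : ℝ → ℝ) (hF : ∀ t, F_K t = ∫ z in Set.Iic t, K z)
    (e : ℝ) :
    HasDerivAt
      (fun x => ∫ v, ((x - v) * (τ - if x - v < 0 then 1 else 0)) * (h⁻¹ * K (v / h)))
      (F_K (e / h) - (1 - τ)) e := by
  have hderiv := hasDerivAt_integral_checkLoss_sub_mul (Ioo_subset_Icc_self hτ)
    (integrable_scaledKernel hKint hh.ne') (integrable_abs_mul_scaledKernel hMint hh) e
  rw [integral_scaledKernel hh, setIntegral_Ioi_scaledKernel hh, hK1] at hderiv
  have hsplit : F_K (e / h) + ∫ z in Ioi (e / h), K z = 1 := by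
    rw [hF, intervalIntegral.integral_Iic_add_Ioi hKint.integrableOn hKint.integrableOn, hK1]
  exact hderiv.congr_deriv (by linarith)

/-- The derivative of the smoothed check loss `L_h(e;τ) = (ρ_τ * K_h)(e)` with respect to `e`
equals `Ψ_h(e;τ) = F_K(e/h) − (1−τ)`, at every `e` where the kernel CDF `F_K` is continuous
(at `e/h`). -/
theorem smoothed_check_loss_hasDerivAt
    (τ h : ℝ) (hτ : τ ∈ Set.Ioo (0 : ℝ) 1) (hh : 0 < h)
    (K : ℝ → ℝ) (hK0 : ∀ v, 0 ≤ K v) (hKint : Integrable K)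
    (hK1 : ∫ v, K v = 1)
    (hMint : Integrable (fun v => |v| * K v))
    (F_K : ℝ → ℝ) (hF : ∀ t, F_K t = ∫ z in Set.Iic t, K z)
    (e : ℝ) (hcont : ContinuousAt F_K (e / h)) :
    HasDerivAt
      (fun x => ∫ v, ((x - v) * (τ - if x - v < 0 then 1 else 0)) * (h⁻¹ * K (v / h)))
      (F_K (e / h) - (1 - τ)) e :=
  smoothed_check_loss_hasDerivAt_general τ h hτ hh K hKint hK1 hMint F_K hF e
end

section
/- Suppose y ∈ ℝ^n, X is an n×d real matrix of full column rank, and the per-observation loss satisfies L_h(e;τ) ≥ c₁|e| − C₁ with c₁ > 0, C₁ ≥ 0. Then the sum S(β) = Σᵢ L_h(yᵢ − xᵢᵀβ; τ) satisfies S(β) ≥ c₄‖β‖₂ − C₂ for some constants c₄ > 0 and C₂ ≥ 0 independent of β; consequently, for any fixed θ > 0 the improper-uniform-prior posterior ∫_{ℝ^d} exp(−θS(β)) dβ is finite. -/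
/-!
Since `X` has full column rank, `β ↦ Xβ` is injective and hence bounded below:
`‖β‖ ≤ K ‖Xβ‖`. Summing the linear lower bound on the loss and using
`‖y - Xβ‖ ≤ ∑ |yᵢ - xᵢᵀβ|` (sup norm on `ℝⁿ`) gives
`S(β) ≥ (c₁/K) ‖β‖ - (c₁ ‖y‖ + n C₁)`. So `exp (-θ S)` is dominated by a multiple of
`exp (-θ c₁/K ‖β‖)`, which is integrable against Lebesgue measure (in polar coordinates it
reduces to a Gamma integral).
-/

open MeasureTheory Real

theorem Matrix.mulVec_injective_of_rank_eq_card {m n K : Type*} [Fintype m] [Fintype n]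
    [Field K] {A : Matrix m n K} (hA : A.rank = Fintype.card n) :
    Function.Injective A.mulVec := by
  have h := LinearMap.finrank_range_add_finrank_ker A.mulVecLin
  rw [Module.finrank_fintype_fun_eq_card, ← Matrix.rank, hA, add_eq_left,
    Submodule.finrank_eq_zero, LinearMap.ker_eq_bot] at h
  exact h

theorem LinearMap.exists_pos_mul_norm_le_norm_of_injective {𝕜 E F : Type*}
    [NontriviallyNormedField 𝕜] [CompleteSpace 𝕜] [NormedAddCommGroup E] [NormedSpace 𝕜 E]
    [FiniteDimensional 𝕜 E] [NormedAddCommGroup F] [NormedSpace 𝕜 F] {f : E →ₗ[𝕜] F}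
    (hf : Function.Injective f) : ∃ a > 0, ∀ x, a * ‖x‖ ≤ ‖f x‖ := by
  obtain ⟨K, hK, hf⟩ := f.exists_antilipschitzWith (LinearMap.ker_eq_bot.2 hf)
  refine ⟨(K : ℝ)⁻¹, by positivity, fun x => ?_⟩
  rw [inv_mul_le_iff₀ (by positivity)]
  exact ZeroHomClass.bound_of_antilipschitz f hf x

theorem norm_le_sum_abs {ι : Type*} [Fintype ι] (v : ι → ℝ) : ‖v‖ ≤ ∑ i, |v i| :=
  (pi_norm_le_iff_of_nonneg (by positivity)).2 fun i =>
    Finset.single_le_sum (f := fun i => |v i|) (fun j _ => abs_nonneg (v j)) (Finset.mem_univ i)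

theorem mul_norm_sub_le_sum_of_abs_growth {ι : Type*} [Fintype ι] {L : ℝ → ℝ} {c C : ℝ}
    (hc : 0 ≤ c) (hL : ∀ e, c * |e| - C ≤ L e) (v : ι → ℝ) :
    c * ‖v‖ - Fintype.card ι * C ≤ ∑ i, L (v i) :=
  calc c * ‖v‖ - Fintype.card ι * C ≤ ∑ i, (c * |v i| - C) := by
        rw [Finset.sum_sub_distrib, ← Finset.mul_sum, Finset.sum_const, nsmul_eq_mul,
          Finset.card_univ]
        gcongr
        exact norm_le_sum_abs v
    _ ≤ ∑ i, L (v i) := Finset.sum_le_sum fun i _ => hL (v i)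

theorem mul_mul_norm_sub_le_sum_residual_of_abs_growth {E ι : Type*} [SeminormedAddCommGroup E]
    [Fintype ι] {L : ℝ → ℝ} {c C : ℝ} (hc : 0 ≤ c) (hL : ∀ e, c * |e| - C ≤ L e)
    {A : E → ι → ℝ} {a : ℝ} (hA : ∀ x, a * ‖x‖ ≤ ‖A x‖) (y : ι → ℝ) (x : E) :
    c * a * ‖x‖ - (c * ‖y‖ + Fintype.card ι * C) ≤ ∑ i, L (y i - A x i) :=
  calc c * a * ‖x‖ - (c * ‖y‖ + Fintype.card ι * C)
      = c * (a * ‖x‖ - ‖y‖) - Fintype.card ι * C := by ring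
    _ ≤ c * ‖y - A x‖ - Fintype.card ι * C := by
        gcongr
        calc a * ‖x‖ - ‖y‖ ≤ ‖A x‖ - ‖y‖ := by gcongr; exact hA x
          _ ≤ ‖y - A x‖ := by rw [norm_sub_rev]; exact norm_sub_norm_le _ _
    _ ≤ ∑ i, L (y i - A x i) := mul_norm_sub_le_sum_of_abs_growth hc hL (y - A x)

theorem integrable_exp_neg_mul_norm {E : Type*} [NormedAddCommGroup E] [NormedSpace ℝ E]
    [FiniteDimensional ℝ E] [MeasurableSpace E] [BorelSpace E] (μ : Measure E)
    [μ.IsAddHaarMeasure] {b : ℝ} (hb : 0 < b) :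
    Integrable (fun x : E => exp (-(b * ‖x‖))) μ := by
  rcases subsingleton_or_nontrivial E with hE | hE
  · simp [Subsingleton.elim _ (0 : E)]
  · rw [integrable_fun_norm_addHaar μ (f := fun t => exp (-(b * t)))]
    refine (integrableOn_rpow_mul_exp_neg_mul_rpow (p := 1) (s := (Module.finrank ℝ E - 1 : ℕ))
      (neg_one_lt_zero.trans_le (Nat.cast_nonneg _)) one_pos hb).congr_fun
      (fun t _ => ?_) measurableSet_Ioi
    simp

theorem integrable_exp_neg_of_mul_norm_sub_le {E : Type*} [NormedAddCommGroup E]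
    [NormedSpace ℝ E] [FiniteDimensional ℝ E] [MeasurableSpace E] [BorelSpace E]
    (μ : Measure E) [μ.IsAddHaarMeasure] {f : E → ℝ} (hf : AEStronglyMeasurable f μ)
    {c C : ℝ} (hc : 0 < c) (hfc : ∀ x, c * ‖x‖ - C ≤ f x) :
    Integrable (fun x => exp (-f x)) μ := by
  refine ((integrable_exp_neg_mul_norm μ hc).const_mul (exp C)).mono'
    (continuous_exp.comp_aestronglyMeasurable hf.neg) (.of_forall fun x => ?_)
  rw [norm_of_nonneg (exp_pos _).le, ← exp_add, exp_le_exp]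
  linarith [hfc x]

/-- If `X` has full column rank and the per-observation loss satisfies
`L_h(e;τ) ≥ c₁|e| − C₁`, then `S(β) = Σᵢ L_h(yᵢ − xᵢᵀβ)` satisfies
`S(β) ≥ c₄‖β‖₂ − C₂` for some `c₄ > 0, C₂ ≥ 0`, and consequently for every fixed
`θ > 0` the improper-uniform-prior posterior `∫ exp(−θS(β)) dβ` is finite. -/
theorem sum_smoothed_loss_growth_and_posterior_integrable (n d : ℕ)
    (y : Fin n → ℝ) (X : Matrix (Fin n) (Fin d) ℝ) (hX : X.rank = d)
    (Lh : ℝ → ℝ) (hLm : Measurable Lh)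
    (c₁ C₁ : ℝ) (hc₁ : 0 < c₁) (hC₁ : 0 ≤ C₁)
    (hgrow : ∀ e : ℝ, c₁ * |e| - C₁ ≤ Lh e) :
    ∃ c₄ : ℝ, 0 < c₄ ∧ ∃ C₂ : ℝ, 0 ≤ C₂ ∧
      (∀ β : EuclideanSpace ℝ (Fin d),
        c₄ * ‖β‖ - C₂ ≤ ∑ i, Lh (y i - ∑ j, X i j * β j)) ∧
      (∀ θ : ℝ, 0 < θ →
        Integrable (fun β : EuclideanSpace ℝ (Fin d) =>
          Real.exp (-θ * ∑ i, Lh (y i - ∑ j, X i j * β j)))) := by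
  set A := X.mulVecLin ∘ₗ (WithLp.linearEquiv 2 ℝ (Fin d → ℝ)).toLinearMap
  have hA : Function.Injective A :=
    (X.mulVec_injective_of_rank_eq_card (by rw [hX, Fintype.card_fin])).comp
      (WithLp.linearEquiv 2 ℝ (Fin d → ℝ)).injective
  obtain ⟨a, ha, hAa⟩ := LinearMap.exists_pos_mul_norm_le_norm_of_injective hA
  have hS (β : EuclideanSpace ℝ (Fin d)) :
      c₁ * a * ‖β‖ - (c₁ * ‖y‖ + n * C₁) ≤ ∑ i, Lh (y i - ∑ j, X i j * β j) := by
    have := mul_mul_norm_sub_le_sum_residual_of_abs_growth hc₁.le hgrow hAa y β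
    rwa [Fintype.card_fin] at this
  refine ⟨c₁ * a, by positivity, c₁ * ‖y‖ + n * C₁, by positivity, hS, fun θ hθ => ?_⟩
  simp_rw [neg_mul]
  refine integrable_exp_neg_of_mul_norm_sub_le volume
    (by fun_prop : Measurable _).aestronglyMeasurable (mul_pos hθ (mul_pos hc₁ ha))
    (C := θ * (c₁ * ‖y‖ + n * C₁)) fun β => ?_
  nlinarith [hS β]
end
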